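/- Theorem 2.1, energy part: Suppose (u_h, q_h, p_h) satisfy the semidiscrete DG scheme with zero source, with numerical traces û_h = {u_h}, q̂_h = {q_h} + τ_qu ⟦u_h⟧, p̂_h = {p_h} + τ_pu ⟦u_h⟧ at every node, where the (node-independent) parameters τ_qu, τ_pu : [0,T] → ℝ satisfy at every t: τ_pu Σ_{i=1}^N ⟦u_h⟧²(x_i) − ε τ_qu Σ_{i=1}^N ⟦u_h⟧⟦q_h⟧(x_i) = Σ_{i=1}^N ( ⟦V(u_h)⟧ − {Π f(u_h)} ⟦u_h⟧ )(x_i). Then the discrete energy t ↦ Σ_{i=1}^N ∫_{I_i} u_h(x,t)² dx is constant on [0,T]. -/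

import Mathlib

open Polynomial Set

noncomputable section

namespace DG

/-- A broken polynomial function in `W_h^k` (before imposing the degree bound):
the polynomial indexed by `i` is the restriction of the function to
element `I_i = (x (i-1), x i)`, for `i = 1,…,N`. -/
abbrev Broken := ℕ → Polynomial ℝ

/-- Membership in `W_h^k`: every elementwise polynomial has degree at most `k`. -/
def DegLE (k : ℕ) (P : Broken) : Prop := ∀ i, (P i).natDegree ≤ k

/-- `(F, G) = Σ_{i=1}^N ∫_{I_i} F_i G_i dx` for families of functions on the elements. -/
def ip (x : ℕ → ℝ) (N : ℕ) (F G : ℕ → ℝ → ℝ) : ℝ :=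
  ∑ i ∈ Finset.Icc 1 N, ∫ y in (x (i-1))..(x i), F i y * G i y

/-- the family of real functions determined by a broken polynomial -/
def ev (P : Broken) : ℕ → ℝ → ℝ := fun i y => (P i).eval y

/-- elementwise spatial derivative -/
def dx (P : Broken) : Broken := fun i => (P i).derivative

/-- `⟨φ̂, v n⟩ = Σ_{i=1}^N [φ̂(x_i) v(x_i⁻) - φ̂(x_{i-1}) v(x_{i-1}⁺)]` where `φ̂` is a
numerical trace, i.e. a function on the node indices. -/
def bt (x : ℕ → ℝ) (N : ℕ) (φ : ℕ → ℝ) (v : Broken) : ℝ :=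
  ∑ i ∈ Finset.Icc 1 N, (φ i * (v i).eval (x i) - φ (i - 1) * (v i).eval (x (i - 1)))

/-- the one-sided limit `ζ(x_i⁻)` of a broken polynomial at the node `x_i`, `i = 1,…,N` -/
def lv (x : ℕ → ℝ) (P : Broken) (i : ℕ) : ℝ := (P i).eval (x i)

/-- the one-sided limit `ζ(x_i⁺)` at the node `x_i`, with the periodic identification
`ζ(x_N⁺) = ζ(x_0⁺)` -/
def rv (x : ℕ → ℝ) (N : ℕ) (P : Broken) (i : ℕ) : ℝ :=
  if i = N then (P 1).eval (x 0) else (P (i + 1)).eval (x i)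

/-- the jump `⟦ζ⟧(x_i) = ζ(x_i⁻) - ζ(x_i⁺)` -/
def jmp (x : ℕ → ℝ) (N : ℕ) (P : Broken) (i : ℕ) : ℝ := lv x P i - rv x N P i

/-- the average `{ζ}(x_i) = (ζ(x_i⁻) + ζ(x_i⁺))/2` -/
def avg (x : ℕ → ℝ) (N : ℕ) (P : Broken) (i : ℕ) : ℝ := (lv x P i + rv x N P i) / 2

/-- the jump `⟦g(ζ)⟧(x_i)` of a composition `g ∘ ζ` -/
def jmpC (x : ℕ → ℝ) (N : ℕ) (g : ℝ → ℝ) (P : Broken) (i : ℕ) : ℝ :=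
  g (lv x P i) - g (rv x N P i)

/-- `η(w,v) = Σ_{i=1}^N ⟦w⟧⟦v⟧(x_i)` -/
def eta (x : ℕ → ℝ) (N : ℕ) (w v : Broken) : ℝ :=
  ∑ i ∈ Finset.Icc 1 N, jmp x N w i * jmp x N v i

/-- the mesh `a = x 0 < x 1 < ⋯ < x N = b` -/
structure Mesh (a b : ℝ) (N : ℕ) (x : ℕ → ℝ) : Prop where
  hab : a < b
  hN : 1 ≤ N
  left : x 0 = a
  right : x N = b
  mono : ∀ i, i < N → x i < x (i + 1)

/-- `Pf` is the elementwise L²-projection of the function `y ↦ f(ζ(y))` onto `W_h^k`: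
it has degree at most `k` and `∫_{I_i} (Pf - f(ζ)) w = 0` for every polynomial `w` of
degree at most `k` and every element `i`. -/
def IsProj (x : ℕ → ℝ) (N k : ℕ) (f : ℝ → ℝ) (P Pf : Broken) : Prop :=
  DegLE k Pf ∧ ∀ i ∈ Finset.Icc 1 N, ∀ w : Polynomial ℝ, w.natDegree ≤ k →
    (∫ y in (x (i-1))..(x i), ((Pf i).eval y - f ((P i).eval y)) * w.eval y) = 0

/-- a numerical trace takes equal values at the nodes `x_0` and `x_N` -/
def IsTrace (N : ℕ) (φ : ℕ → ℝ) : Prop := φ 0 = φ N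

/-- The semidiscrete DG scheme with zero source on `[0,T]`: `u q p : ℝ → Broken`
are the approximations (depending differentiably on `t`, with time derivatives
`ut qt pt`), and `uh qh ph` are the (possibly `t`-dependent) numerical traces. -/
structure Scheme (x : ℕ → ℝ) (N k : ℕ) (T ε : ℝ) (f : ℝ → ℝ)
    (u q p ut qt pt : ℝ → Broken) (uh qh ph : ℝ → ℕ → ℝ) : Prop where
  degu : ∀ t ∈ Icc (0:ℝ) T, DegLE k (u t)
  degq : ∀ t ∈ Icc (0:ℝ) T, DegLE k (q t)
  degp : ∀ t ∈ Icc (0:ℝ) T, DegLE k (p t)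
  degut : ∀ t ∈ Icc (0:ℝ) T, DegLE k (ut t)
  trace_u : ∀ t ∈ Icc (0:ℝ) T, IsTrace N (uh t)
  trace_q : ∀ t ∈ Icc (0:ℝ) T, IsTrace N (qh t)
  trace_p : ∀ t ∈ Icc (0:ℝ) T, IsTrace N (ph t)
  du : ∀ t ∈ Icc (0:ℝ) T, ∀ i, ∀ y : ℝ,
    HasDerivWithinAt (fun s => ((u s) i).eval y) (((ut t) i).eval y) (Icc (0:ℝ) T) t
  dq : ∀ t ∈ Icc (0:ℝ) T, ∀ i, ∀ y : ℝ,
    HasDerivWithinAt (fun s => ((q s) i).eval y) (((qt t) i).eval y) (Icc (0:ℝ) T) t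
  dp : ∀ t ∈ Icc (0:ℝ) T, ∀ i, ∀ y : ℝ,
    HasDerivWithinAt (fun s => ((p s) i).eval y) (((pt t) i).eval y) (Icc (0:ℝ) T) t
  eq1 : ∀ t ∈ Icc (0:ℝ) T, ∀ v : Broken, DegLE k v →
    ip x N (ev (q t)) (ev v) + ip x N (ev (u t)) (ev (dx v)) - bt x N (uh t) v = 0
  eq2 : ∀ t ∈ Icc (0:ℝ) T, ∀ z : Broken, DegLE k z →
    ip x N (ev (p t)) (ev z) + ε * ip x N (ev (q t)) (ev (dx z)) - ε * bt x N (qh t) z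
      = ip x N (fun i y => f (((u t) i).eval y)) (ev z)
  eq3 : ∀ t ∈ Icc (0:ℝ) T, ∀ w : Broken, DegLE k w →
    ip x N (ev (ut t)) (ev w) - ip x N (ev (p t)) (ev (dx w)) + bt x N (ph t) w = 0

end DG

/-!
Test the third equation of the scheme with `u_h`, the first with `p_h` and with `Π f(u_h)`, and
the second with `q_h`. After elementwise integration by parts every volume term cancels, using
`(f(u_h), q_h) = (Π f(u_h), q_h)` and `(Π f(u_h), ∂ₓu_h) = (f(u_h), ∂ₓu_h) = Σ ⟦V(u_h)⟧`,
and `(∂ₜu_h, u_h)` reduces to the node sum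
`Σ (⟦V(u_h)⟧ - {Π f(u_h)}⟦u_h⟧) + ε τ_qu Σ ⟦u_h⟧⟦q_h⟧ - τ_pu Σ ⟦u_h⟧²`,
which vanishes by the constraint on the parameters. The time derivative of the energy may be
taken under the integral because on each element `u_h` is a polynomial of degree at most `k`,
a fixed linear combination of its values at `k + 1` points.
-/

open Polynomial Set

namespace DG

lemma sum_Icc_pred_periodic {M : Type*} [AddCommMonoid M] (N : ℕ) (c : ℕ → M) :
    ∑ i ∈ Finset.Icc 1 N, c (i - 1) = ∑ i ∈ Finset.Icc 1 N, if i = N then c 0 else c i := by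
  refine Finset.sum_nbij' (fun i => if i = 1 then N else i - 1)
    (fun j => if j = N then 1 else j + 1) ?_ ?_ ?_ ?_ ?_
  all_goals intro i hi; simp only [Finset.mem_Icc] at *
  all_goals split_ifs <;> first | omega | (subst_vars; simp_all)

lemma sum_eval_pred_node (x : ℕ → ℝ) (N : ℕ) (g : ℕ → ℝ → ℝ) :
    ∑ i ∈ Finset.Icc 1 N, g i (x (i - 1))
      = ∑ i ∈ Finset.Icc 1 N, if i = N then g 1 (x 0) else g (i + 1) (x i) := by
  rw [← sum_Icc_pred_periodic N fun j => g (j + 1) (x j)]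
  refine Finset.sum_congr rfl fun i hi => ?_
  rw [Nat.sub_add_cancel (Finset.mem_Icc.1 hi).1]

lemma sum_eval_pred_node_eq_sum_rv (x : ℕ → ℝ) (N : ℕ) (G : ℝ → ℝ → ℝ) (v w : Broken) :
    ∑ i ∈ Finset.Icc 1 N, G ((v i).eval (x (i - 1))) ((w i).eval (x (i - 1)))
      = ∑ i ∈ Finset.Icc 1 N, G (rv x N v i) (rv x N w i) := by
  rw [sum_eval_pred_node x N fun i y => G ((v i).eval y) ((w i).eval y)]
  refine Finset.sum_congr rfl fun i _ => ?_
  unfold rv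
  split_ifs <;> rfl

section Nodes

variable {x : ℕ → ℝ} {N : ℕ}

lemma bt_eq_sum_mul_jmp {φ : ℕ → ℝ} (hφ : IsTrace N φ) (v : Broken) :
    bt x N φ v = ∑ i ∈ Finset.Icc 1 N, φ i * jmp x N v i := by
  unfold bt
  rw [Finset.sum_sub_distrib, sum_eval_pred_node x N fun i y => φ (i - 1) * (v i).eval y,
    ← Finset.sum_sub_distrib]
  refine Finset.sum_congr rfl fun i _ => ?_
  unfold jmp lv rv
  split_ifs with h
  · subst h
    unfold IsTrace at hφ
    rw [Nat.sub_self, hφ]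
    ring
  · simp only [Nat.add_sub_cancel]
    ring

lemma bt_eq_of_flux {φ : ℕ → ℝ} (hφ : IsTrace N φ) {w u : Broken} {τ : ℝ}
    (h : ∀ i ∈ Finset.Icc 1 N, φ i = avg x N w i + τ * jmp x N u i) (v : Broken) :
    bt x N φ v = ∑ i ∈ Finset.Icc 1 N, avg x N w i * jmp x N v i + τ * eta x N u v := by
  rw [bt_eq_sum_mul_jmp hφ, eta, Finset.mul_sum, ← Finset.sum_add_distrib]
  exact Finset.sum_congr rfl fun i hi => by rw [h i hi]; ring

end Nodes

lemma DegLE.dx {k : ℕ} {P : Broken} (h : DegLE k P) : DegLE k (dx P) := fun i =>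
  (natDegree_derivative_le _).trans ((Nat.sub_le _ _).trans (h i))

lemma ip_comm (x : ℕ → ℝ) (N : ℕ) (F G : ℕ → ℝ → ℝ) : ip x N F G = ip x N G F :=
  Finset.sum_congr rfl fun _ _ => intervalIntegral.integral_congr fun _ _ => mul_comm _ _

lemma integral_eval_derivative_mul_add (P Q : ℝ[X]) (c d : ℝ) :
    (∫ y in c..d, P.derivative.eval y * Q.eval y) + ∫ y in c..d, P.eval y * Q.derivative.eval y
      = P.eval d * Q.eval d - P.eval c * Q.eval c := by
  rw [← intervalIntegral.integral_add
    ((by fun_prop : Continuous fun y => P.derivative.eval y * Q.eval y).intervalIntegrable _ _)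
    ((by fun_prop : Continuous fun y => P.eval y * Q.derivative.eval y).intervalIntegrable _ _)]
  exact intervalIntegral.integral_deriv_mul_eq_sub (fun y _ => P.hasDerivAt y)
    (fun y _ => Q.hasDerivAt y) (P.derivative.continuous.intervalIntegrable _ _)
    (Q.derivative.continuous.intervalIntegrable _ _)

lemma ip_dx_add_ip_dx (x : ℕ → ℝ) (N : ℕ) (v w : Broken) :
    ip x N (ev (dx v)) (ev w) + ip x N (ev v) (ev (dx w))
      = ∑ i ∈ Finset.Icc 1 N, (avg x N v i * jmp x N w i + avg x N w i * jmp x N v i) := by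
  unfold ip ev dx
  rw [← Finset.sum_add_distrib,
    Finset.sum_congr rfl fun i _ => integral_eval_derivative_mul_add (v i) (w i) _ _,
    Finset.sum_sub_distrib,
    sum_eval_pred_node_eq_sum_rv x N (· * ·) v w, ← Finset.sum_sub_distrib]
  refine Finset.sum_congr rfl fun i _ => ?_
  unfold avg jmp lv
  ring

lemma ip_dx_self (x : ℕ → ℝ) (N : ℕ) (v : Broken) :
    ip x N (ev v) (ev (dx v)) = ∑ i ∈ Finset.Icc 1 N, avg x N v i * jmp x N v i := by
  have h := ip_dx_add_ip_dx x N v v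
  rw [ip_comm x N (ev (dx v))] at h
  simp only [← two_mul, ← Finset.mul_sum] at h
  linarith

section Projection

variable {x : ℕ → ℝ} {N k : ℕ} {f : ℝ → ℝ} {U F : Broken}

lemma IsProj.ip_eq (hf : Continuous f) (h : IsProj x N k f U F) {w : Broken}
    (hw : DegLE k w) :
    ip x N (fun i y => f ((U i).eval y)) (ev w) = ip x N (ev F) (ev w) := by
  refine Finset.sum_congr rfl fun i hi => ?_
  have h0 := h.2 i hi (w i) (hw i)
  simp only [sub_mul] at h0
  rw [intervalIntegral.integral_sub
    ((by fun_prop : Continuous fun y => (F i).eval y * (w i).eval y).intervalIntegrable _ _)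
    ((by fun_prop : Continuous fun y => f ((U i).eval y) * (w i).eval y).intervalIntegrable _ _)]
    at h0
  exact (sub_eq_zero.1 h0).symm

lemma integral_comp_eval_mul_derivative {V : ℝ → ℝ} (hf : Continuous f)
    (hV : ∀ y, HasDerivAt V (f y) y) (P : ℝ[X]) (c d : ℝ) :
    ∫ y in c..d, f (P.eval y) * P.derivative.eval y = V (P.eval d) - V (P.eval c) :=
  intervalIntegral.integral_eq_sub_of_hasDerivAt
    (fun y _ => (hV (P.eval y)).comp y (P.hasDerivAt y))
    (((hf.comp P.continuous).mul P.derivative.continuous).intervalIntegrable _ _)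

lemma IsProj.ip_dx_eq_sum_jmpC {V : ℝ → ℝ} (hf : Continuous f)
    (hV : ∀ y, HasDerivAt V (f y) y) (h : IsProj x N k f U F) (hU : DegLE k U) :
    ip x N (ev F) (ev (dx U)) = ∑ i ∈ Finset.Icc 1 N, jmpC x N V U i := by
  rw [← h.ip_eq hf hU.dx]
  unfold ip ev dx
  rw [Finset.sum_congr rfl fun i _ => integral_comp_eval_mul_derivative hf hV (U i) _ _,
    Finset.sum_sub_distrib, sum_eval_pred_node_eq_sum_rv x N (fun a _ => V a) U U,
    ← Finset.sum_sub_distrib]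
  rfl

end Projection

noncomputable def lagrangeNat (k m : ℕ) : ℝ[X] :=
  Lagrange.basis (Finset.range (k + 1)) (fun j : ℕ => (j : ℝ)) m

lemma eval_eq_sum_eval_mul_lagrangeNat {k : ℕ} {P : ℝ[X]} (hP : P.natDegree ≤ k) (y : ℝ) :
    P.eval y = ∑ m ∈ Finset.range (k + 1), P.eval (m : ℝ) * (lagrangeNat k m).eval y := by
  have hinj : Set.InjOn (fun j : ℕ => (j : ℝ)) (Finset.range (k + 1)) :=
    fun _ _ _ _ h => Nat.cast_injective h
  have hdeg : P.degree < (Finset.range (k + 1)).card := by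
    rw [Finset.card_range]
    exact degree_le_natDegree.trans_lt (by exact_mod_cast Nat.lt_succ_of_le hP)
  conv_lhs => rw [Lagrange.eq_interpolate hinj hdeg]
  rw [Lagrange.interpolate_apply, eval_finsetSum]
  simp [lagrangeNat]

lemma integral_eval_eq_sum {k : ℕ} {P : ℝ[X]} (hP : P.natDegree ≤ k) (c d : ℝ) :
    ∫ y in c..d, P.eval y
      = ∑ m ∈ Finset.range (k + 1), P.eval (m : ℝ) * ∫ y in c..d, (lagrangeNat k m).eval y := by
  rw [funext (eval_eq_sum_eval_mul_lagrangeNat hP), intervalIntegral.integral_finsetSum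
    fun m _ => (by fun_prop : Continuous _).intervalIntegrable _ _]
  exact Finset.sum_congr rfl fun m _ => intervalIntegral.integral_const_mul _ _

section TimeDerivative

variable {k : ℕ} {S : Set ℝ} {t : ℝ}

lemma hasDerivWithinAt_integral_eval {P : ℝ → ℝ[X]} {P' : ℝ[X]} (ht : t ∈ S)
    (hP : ∀ s ∈ S, (P s).natDegree ≤ k) (hP' : P'.natDegree ≤ k)
    (hd : ∀ y, HasDerivWithinAt (fun s => (P s).eval y) (P'.eval y) S t) (c d : ℝ) :
    HasDerivWithinAt (fun s => ∫ y in c..d, (P s).eval y) (∫ y in c..d, P'.eval y) S t := by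
  rw [integral_eval_eq_sum hP' c d]
  exact (HasDerivWithinAt.fun_sum fun (m : ℕ) _ => (hd m).mul_const _).congr
    (fun s hs => integral_eval_eq_sum (hP s hs) c d) (integral_eval_eq_sum (hP t ht) c d)

lemma hasDerivWithinAt_integral_eval_sq {P : ℝ → ℝ[X]} {P' : ℝ[X]} (ht : t ∈ S)
    (hP : ∀ s ∈ S, (P s).natDegree ≤ k) (hP' : P'.natDegree ≤ k)
    (hd : ∀ y, HasDerivWithinAt (fun s => (P s).eval y) (P'.eval y) S t) (c d : ℝ) :
    HasDerivWithinAt (fun s => ∫ y in c..d, (P s).eval y ^ 2)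
      (2 * ∫ y in c..d, P'.eval y * (P t).eval y) S t := by
  have hdeg : (C 2 * (P' * P t)).natDegree ≤ 2 * k :=
    (natDegree_C_mul_le _ _).trans (natDegree_mul_le.trans (by linarith [hP t ht]))
  have h := hasDerivWithinAt_integral_eval (P := fun s => P s ^ 2) ht
    (fun s hs => natDegree_pow_le_of_le 2 (hP s hs)) hdeg
    (fun y => by simpa [eval_pow, mul_comm, mul_left_comm] using (hd y).fun_pow 2) c d
  simpa [eval_pow, intervalIntegral.integral_const_mul] using h

lemma hasDerivWithinAt_energy (x : ℕ → ℝ) (N : ℕ) {u : ℝ → Broken} {ut : Broken} (ht : t ∈ S)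
    (hu : ∀ s ∈ S, DegLE k (u s)) (hut : DegLE k ut)
    (hd : ∀ i y, HasDerivWithinAt (fun s => (u s i).eval y) ((ut i).eval y) S t) :
    HasDerivWithinAt
      (fun s => ∑ i ∈ Finset.Icc 1 N, ∫ y in (x (i - 1))..(x i), (u s i).eval y ^ 2)
      (2 * ip x N (ev ut) (ev (u t))) S t := by
  rw [ip, Finset.mul_sum]
  exact HasDerivWithinAt.fun_sum fun i _ =>
    hasDerivWithinAt_integral_eval_sq ht (fun s hs => hu s hs i) (hut i) (hd i) _ _

end TimeDerivative

lemma constant_of_hasDerivWithinAt_Icc_zero {g : ℝ → ℝ} {a b : ℝ}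
    (hg : ∀ t ∈ Icc a b, HasDerivWithinAt g 0 (Icc a b) t) : ∀ s ∈ Icc a b, g s = g a :=
  constant_of_has_deriv_right_zero (fun s hs => (hg s hs).continuousWithinAt) fun s hs =>
    (hg s (Ico_subset_Icc_self hs)).mono_of_mem_nhdsWithin (Icc_mem_nhdsGE_of_mem hs)

namespace Scheme

variable {x : ℕ → ℝ} {N k : ℕ} {T ε : ℝ} {f : ℝ → ℝ} {u q p ut qt pt : ℝ → Broken}
  {uh qh ph : ℝ → ℕ → ℝ} {t : ℝ}

lemma ip_q_eq (hS : Scheme x N k T ε f u q p ut qt pt uh qh ph) (ht : t ∈ Icc 0 T)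
    (huh : ∀ i ∈ Finset.Icc 1 N, uh t i = avg x N (u t) i) {v : Broken} (hv : DegLE k v) :
    ip x N (ev v) (ev (q t))
      = ip x N (ev v) (ev (dx (u t))) - ∑ i ∈ Finset.Icc 1 N, avg x N v i * jmp x N (u t) i := by
  rw [ip_comm x N (ev v), ip_comm x N (ev v)]
  have h1 := hS.eq1 t ht v hv
  rw [bt_eq_of_flux (hS.trace_u t ht) (u := u t) (τ := 0)
    (fun i hi => by rw [huh i hi, zero_mul, add_zero])] at h1
  have h2 := ip_dx_add_ip_dx x N (u t) v
  rw [Finset.sum_add_distrib] at h2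
  linarith

lemma ip_ut_u_eq (hS : Scheme x N k T ε f u q p ut qt pt uh qh ph) (ht : t ∈ Icc 0 T) {τ : ℝ}
    (hph : ∀ i ∈ Finset.Icc 1 N, ph t i = avg x N (p t) i + τ * jmp x N (u t) i) :
    ip x N (ev (ut t)) (ev (u t)) = ip x N (ev (p t)) (ev (dx (u t)))
      - ∑ i ∈ Finset.Icc 1 N, avg x N (p t) i * jmp x N (u t) i - τ * eta x N (u t) (u t) := by
  have h := hS.eq3 t ht (u t) (hS.degu t ht)
  rw [bt_eq_of_flux (hS.trace_p t ht) hph] at h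
  linarith

lemma ip_p_q_eq (hS : Scheme x N k T ε f u q p ut qt pt uh qh ph) (ht : t ∈ Icc 0 T)
    (hf : Continuous f) {F : Broken} (hF : IsProj x N k f (u t) F) {τ : ℝ}
    (hqh : ∀ i ∈ Finset.Icc 1 N, qh t i = avg x N (q t) i + τ * jmp x N (u t) i) :
    ip x N (ev (p t)) (ev (q t)) = ip x N (ev F) (ev (q t)) + ε * τ * eta x N (u t) (q t) := by
  have h := hS.eq2 t ht (q t) (hS.degq t ht)
  rw [bt_eq_of_flux (hS.trace_q t ht) hqh, ip_dx_self, hF.ip_eq hf (hS.degq t ht)] at h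
  linear_combination h

lemma ip_ut_u_eq_zero (hS : Scheme x N k T ε f u q p ut qt pt uh qh ph) (ht : t ∈ Icc 0 T)
    {V : ℝ → ℝ} (hf : Continuous f) (hV : ∀ y, HasDerivAt V (f y) y) {F : Broken}
    (hF : IsProj x N k f (u t) F) {τqu τpu : ℝ}
    (huh : ∀ i ∈ Finset.Icc 1 N, uh t i = avg x N (u t) i)
    (hqh : ∀ i ∈ Finset.Icc 1 N, qh t i = avg x N (q t) i + τqu * jmp x N (u t) i)
    (hph : ∀ i ∈ Finset.Icc 1 N, ph t i = avg x N (p t) i + τpu * jmp x N (u t) i)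
    (hcons : τpu * eta x N (u t) (u t) - ε * τqu * eta x N (u t) (q t)
      = ∑ i ∈ Finset.Icc 1 N, (jmpC x N V (u t) i - avg x N F i * jmp x N (u t) i)) :
    ip x N (ev (ut t)) (ev (u t)) = 0 := by
  have h_ut := hS.ip_ut_u_eq ht hph
  have h_qp := hS.ip_q_eq ht huh (hS.degp t ht)
  have h_pq := hS.ip_p_q_eq ht hf hF hqh
  have h_qF := hS.ip_q_eq ht huh hF.1
  have h_V := hF.ip_dx_eq_sum_jmpC hf hV (hS.degu t ht)
  rw [Finset.sum_sub_distrib] at hcons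
  linarith

end Scheme

end DG

open DG

theorem dg_energy_part_general
    (N k : ℕ) (x : ℕ → ℝ)
    (T ε : ℝ) (f V : ℝ → ℝ) (hf : Continuous f)
    (hV : ∀ y : ℝ, HasDerivAt V (f y) y)
    (u q p ut qt pt : ℝ → DG.Broken) (uh qh ph : ℝ → ℕ → ℝ)
    (hS : DG.Scheme x N k T ε f u q p ut qt pt uh qh ph)
    (Pf : ℝ → DG.Broken)
    (hPf : ∀ t ∈ Set.Icc (0:ℝ) T, DG.IsProj x N k f (u t) (Pf t))
    (τqu τpu : ℝ → ℝ)
    (huh : ∀ t ∈ Set.Icc (0:ℝ) T, ∀ i ∈ Finset.Icc 1 N,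
      uh t i = DG.avg x N (u t) i)
    (hqh : ∀ t ∈ Set.Icc (0:ℝ) T, ∀ i ∈ Finset.Icc 1 N,
      qh t i = DG.avg x N (q t) i + τqu t * DG.jmp x N (u t) i)
    (hph : ∀ t ∈ Set.Icc (0:ℝ) T, ∀ i ∈ Finset.Icc 1 N,
      ph t i = DG.avg x N (p t) i + τpu t * DG.jmp x N (u t) i)
    (hconsA : ∀ t ∈ Set.Icc (0:ℝ) T,
      τpu t * (∑ i ∈ Finset.Icc 1 N, DG.jmp x N (u t) i ^ 2)
        - ε * τqu t * (∑ i ∈ Finset.Icc 1 N, DG.jmp x N (u t) i * DG.jmp x N (q t) i)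
        = ∑ i ∈ Finset.Icc 1 N,
            (DG.jmpC x N V (u t) i - DG.avg x N (Pf t) i * DG.jmp x N (u t) i)) :
    ∀ t₁ ∈ Set.Icc (0:ℝ) T, ∀ t₂ ∈ Set.Icc (0:ℝ) T,
      (∑ i ∈ Finset.Icc 1 N, ∫ y in (x (i-1))..(x i), ((u t₁) i).eval y ^ 2)
        = ∑ i ∈ Finset.Icc 1 N, ∫ y in (x (i-1))..(x i), ((u t₂) i).eval y ^ 2 := by
  have hrate : ∀ t ∈ Icc (0:ℝ) T, HasDerivWithinAt
      (fun s => ∑ i ∈ Finset.Icc 1 N, ∫ y in (x (i-1))..(x i), ((u s) i).eval y ^ 2)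
      0 (Icc 0 T) t := fun t ht => by
    have hcons : τpu t * eta x N (u t) (u t) - ε * τqu t * eta x N (u t) (q t)
        = ∑ i ∈ Finset.Icc 1 N, (jmpC x N V (u t) i - avg x N (Pf t) i * jmp x N (u t) i) := by
      simpa only [DG.eta, sq] using hconsA t ht
    have hzero := hS.ip_ut_u_eq_zero ht hf hV (hPf t ht) (huh t ht) (hqh t ht) (hph t ht) hcons
    simpa [hzero] using hasDerivWithinAt_energy x N ht hS.degu (hS.degut t ht) (hS.du t ht)
  intro t₁ ht₁ t₂ ht₂
  rw [constant_of_hasDerivWithinAt_Icc_zero hrate t₁ ht₁,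
    constant_of_hasDerivWithinAt_Icc_zero hrate t₂ ht₂]

/-- Theorem 2.1, energy part: with the traces (2.4) and the constraint (2.5a) on the
stabilization parameters, the discrete energy is conserved. -/
theorem dg_energy_part
    (a b : ℝ) (N k : ℕ) (x : ℕ → ℝ) (hmesh : DG.Mesh a b N x)
    (T ε : ℝ) (hT : 0 < T) (f V : ℝ → ℝ) (hf : Continuous f)
    (hV : ∀ y : ℝ, HasDerivAt V (f y) y)
    (u q p ut qt pt : ℝ → DG.Broken) (uh qh ph : ℝ → ℕ → ℝ)
    (hS : DG.Scheme x N k T ε f u q p ut qt pt uh qh ph)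
    (Pf : ℝ → DG.Broken)
    (hPf : ∀ t ∈ Set.Icc (0:ℝ) T, DG.IsProj x N k f (u t) (Pf t))
    (τqu τpu : ℝ → ℝ)
    (huh : ∀ t ∈ Set.Icc (0:ℝ) T, ∀ i ∈ Finset.Icc 1 N,
      uh t i = DG.avg x N (u t) i)
    (hqh : ∀ t ∈ Set.Icc (0:ℝ) T, ∀ i ∈ Finset.Icc 1 N,
      qh t i = DG.avg x N (q t) i + τqu t * DG.jmp x N (u t) i)
    (hph : ∀ t ∈ Set.Icc (0:ℝ) T, ∀ i ∈ Finset.Icc 1 N,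
      ph t i = DG.avg x N (p t) i + τpu t * DG.jmp x N (u t) i)
    (hconsA : ∀ t ∈ Set.Icc (0:ℝ) T,
      τpu t * (∑ i ∈ Finset.Icc 1 N, DG.jmp x N (u t) i ^ 2)
        - ε * τqu t * (∑ i ∈ Finset.Icc 1 N, DG.jmp x N (u t) i * DG.jmp x N (q t) i)
        = ∑ i ∈ Finset.Icc 1 N,
            (DG.jmpC x N V (u t) i - DG.avg x N (Pf t) i * DG.jmp x N (u t) i)) :
    ∀ t₁ ∈ Set.Icc (0:ℝ) T, ∀ t₂ ∈ Set.Icc (0:ℝ) T,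
      (∑ i ∈ Finset.Icc 1 N, ∫ y in (x (i-1))..(x i), ((u t₁) i).eval y ^ 2)
        = ∑ i ∈ Finset.Icc 1 N, ∫ y in (x (i-1))..(x i), ((u t₂) i).eval y ^ 2 :=
  dg_energy_part_general N k x T ε f V hf hV u q p ut qt pt uh qh ph hS Pf hPf τqu τpu huh hqh hph
    hconsA
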